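/- arXiv:1908.01941 — 2 statements merged into one kernel-verified Lean document; each statement's English description precedes it below -/
import Mathlib

section
/- If F : [0,∞) → [0,∞) is increasing and continuous with F > 0 on (0,∞), and y : [0,T] → [0,∞) is absolutely continuous and satisfies y(t) y'(t) ≤ F(y(t)) for almost every t, and y(0) ≤ B, then for all t ∈ [0, min(T, ∫_B^{2B+1} s/F(s) ds)] one has y(t) ≤ 2B + 1. -/
/-!
Compare the time `y` needs to climb from a level `a` to a level `b` with `∫_a^b s / F s ds`.
Between its last visit of `a` and its first visit of `b`, `y` stays in `[a, b]`, where
`y' ≤ F(y) / y ≤ F(b) / a`; so that crossing takes at least `(b - a) a / F(b)`. Crossings of the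
consecutive levels of a grid `B' = a₀ < a₁ < ⋯ < aₙ = 2B + 1` are disjoint in time, so the climb
takes at least the lower sum `∑ (aᵢ₊₁ - aᵢ) aᵢ / F(aᵢ₊₁)`. Since `F` is increasing, the upper sum
`∑ (aᵢ₊₁ - aᵢ) aᵢ₊₁ / F(aᵢ)` dominates the integral, and the two sums differ by `O(mesh)` because
`∑ (1 / F(aᵢ) - 1 / F(aᵢ₊₁))` telescopes. Finally let `B' ↓ B` (`F(B)` may vanish when `B = 0`).
If `y(t) > 2B + 1`, then `y` hits `2B + 1` strictly before `t`, contradicting `t ≤ ∫_B^{2B+1}`.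
-/

open MeasureTheory Set Filter Topology

namespace ODEComparison

noncomputable def lowerSum (F : ℝ → ℝ) (a : ℕ → ℝ) (n : ℕ) : ℝ :=
  ∑ i ∈ Finset.range n, (a (i + 1) - a i) * (a i / F (a (i + 1)))

noncomputable def upperSum (F : ℝ → ℝ) (a : ℕ → ℝ) (n : ℕ) : ℝ :=
  ∑ i ∈ Finset.range n, (a (i + 1) - a i) * (a (i + 1) / F (a i))

noncomputable def uniformGrid (p q : ℝ) (n i : ℕ) : ℝ := p + i * ((q - p) / n)

section Grid

variable {p q : ℝ} {n : ℕ}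

@[simp]
lemma uniformGrid_zero : uniformGrid p q n 0 = p := by
  simp [uniformGrid]

lemma uniformGrid_self (hn : n ≠ 0) : uniformGrid p q n n = q := by
  have : (n : ℝ) ≠ 0 := Nat.cast_ne_zero.mpr hn
  simp only [uniformGrid]
  field_simp
  ring

lemma uniformGrid_succ_sub (i : ℕ) :
    uniformGrid p q n (i + 1) - uniformGrid p q n i = (q - p) / n := by
  simp only [uniformGrid]
  push_cast
  ring

lemma uniformGrid_monotone (hpq : p ≤ q) : Monotone (uniformGrid p q n) := by
  refine monotone_nat_of_le_succ fun i => ?_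
  have hstep := uniformGrid_succ_sub (p := p) (q := q) (n := n) i
  have hmesh : 0 ≤ (q - p) / n := div_nonneg (sub_nonneg.mpr hpq) n.cast_nonneg
  linarith

end Grid

section Sums

variable {F : ℝ → ℝ} {a : ℕ → ℝ} {n : ℕ}

lemma intervalIntegrable_id_div {p q : ℝ} (hpq : p ≤ q) (hF : MonotoneOn F (Icc p q))
    (hFp : 0 < F p) : IntervalIntegrable (fun s => s / F s) volume p q := by
  have hinv : AntitoneOn (fun s => (F s)⁻¹) (uIcc p q) := by
    rw [uIcc_of_le hpq]
    intro s hs r hr hsr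
    exact inv_anti₀ (hFp.trans_le (hF ⟨le_rfl, hpq⟩ hs hs.1)) (hF hs hr hsr)
  simpa only [div_eq_mul_inv, id_eq] using
    hinv.intervalIntegrable.continuousOn_mul continuousOn_id

lemma integral_div_le_upperSum (ha : Monotone a) (ha0 : 0 ≤ a 0)
    (hF : MonotoneOn F (Icc (a 0) (a n))) (hFa0 : 0 < F (a 0)) :
    ∫ s in a 0..a n, s / F s ≤ upperSum F a n := by
  have hmem : ∀ i ≤ n, a i ∈ Icc (a 0) (a n) := fun i hi => ⟨ha (Nat.zero_le i), ha hi⟩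
  have hFpos : ∀ i ≤ n, 0 < F (a i) := fun i hi =>
    hFa0.trans_le (hF (hmem 0 (Nat.zero_le n)) (hmem i hi) (ha (Nat.zero_le i)))
  have hpiece : ∀ i < n, IntervalIntegrable (fun s => s / F s) volume (a i) (a (i + 1)) :=
    fun i hi => intervalIntegrable_id_div (ha i.le_succ)
      (hF.mono (Icc_subset_Icc (hmem i hi.le).1 (hmem (i + 1) hi).2)) (hFpos i hi.le)
  rw [← intervalIntegral.sum_integral_adjacent_intervals hpiece, upperSum]
  refine Finset.sum_le_sum fun i hi => ?_
  have hi : i < n := Finset.mem_range.mp hi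
  have hbound : ∀ s ∈ Icc (a i) (a (i + 1)), s / F s ≤ a (i + 1) / F (a i) := fun s hs =>
    div_le_div₀ (ha0.trans (ha (Nat.zero_le _))) hs.2 (hFpos i hi.le)
      (hF (hmem i hi.le) ⟨(hmem i hi.le).1.trans hs.1, hs.2.trans (hmem (i + 1) hi).2⟩ hs.1)
  calc ∫ s in a i..a (i + 1), s / F s ≤ ∫ _ in a i..a (i + 1), a (i + 1) / F (a i) :=
        intervalIntegral.integral_mono_on (ha i.le_succ) (hpiece i hi) intervalIntegrable_const
          hbound
    _ = (a (i + 1) - a i) * (a (i + 1) / F (a i)) := by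
        rw [intervalIntegral.integral_const, smul_eq_mul]

lemma upperSum_sub_lowerSum_le {δ : ℝ} (ha : Monotone a) (ha0 : 0 ≤ a 0)
    (hF : MonotoneOn F (Icc (a 0) (a n))) (hFa0 : 0 < F (a 0)) (hδ : 0 ≤ δ)
    (hmesh : ∀ i < n, a (i + 1) - a i ≤ δ) :
    upperSum F a n - lowerSum F a n ≤ δ * (2 * a n / F (a 0)) := by
  have hmem : ∀ i ≤ n, a i ∈ Icc (a 0) (a n) := fun i hi => ⟨ha (Nat.zero_le i), ha hi⟩
  have hFle : ∀ i ≤ n, F (a 0) ≤ F (a i) := fun i hi =>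
    hF (hmem 0 (Nat.zero_le n)) (hmem i hi) (ha (Nat.zero_le i))
  have hterm : ∀ i < n,
      (a (i + 1) - a i) * (a (i + 1) / F (a i)) - (a (i + 1) - a i) * (a i / F (a (i + 1)))
        ≤ δ * ((a (i + 1) - a i) / F (a 0)) + δ * a n * (1 / F (a i) - 1 / F (a (i + 1))) := by
    intro i hi
    have hd : 0 ≤ a (i + 1) - a i := sub_nonneg.mpr (ha i.le_succ)
    have hai : 0 ≤ a i := ha0.trans (hmem i hi.le).1
    have hFi : 0 < F (a i) := hFa0.trans_le (hFle i hi.le)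
    have hFi' : 0 < F (a (i + 1)) := hFa0.trans_le (hFle (i + 1) hi)
    have hgap : 0 ≤ 1 / F (a i) - 1 / F (a (i + 1)) :=
      sub_nonneg.mpr (one_div_le_one_div_of_le hFi (hF (hmem i hi.le) (hmem (i + 1) hi)
        (ha i.le_succ)))
    have hsq : (a (i + 1) - a i) * (a (i + 1) - a i) / F (a i)
        ≤ δ * ((a (i + 1) - a i) / F (a 0)) := by
      calc (a (i + 1) - a i) * (a (i + 1) - a i) / F (a i)
          ≤ (a (i + 1) - a i) * (a (i + 1) - a i) / F (a 0) :=
            div_le_div_of_nonneg_left (mul_nonneg hd hd) hFa0 (hFle i hi.le)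
        _ = (a (i + 1) - a i) * ((a (i + 1) - a i) / F (a 0)) := mul_div_assoc _ _ _
        _ ≤ δ * ((a (i + 1) - a i) / F (a 0)) :=
            mul_le_mul_of_nonneg_right (hmesh i hi) (div_nonneg hd hFa0.le)
    have hcross : (a (i + 1) - a i) * a i * (1 / F (a i) - 1 / F (a (i + 1)))
        ≤ δ * a n * (1 / F (a i) - 1 / F (a (i + 1))) :=
      mul_le_mul_of_nonneg_right (mul_le_mul (hmesh i hi) (hmem i hi.le).2 hai hδ) hgap
    have hsplit : (a (i + 1) - a i) * (a (i + 1) / F (a i))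
        - (a (i + 1) - a i) * (a i / F (a (i + 1)))
        = (a (i + 1) - a i) * (a (i + 1) - a i) / F (a i)
          + (a (i + 1) - a i) * a i * (1 / F (a i) - 1 / F (a (i + 1))) := by
      field_simp
      ring
    linarith
  have hFan : 0 < F (a n) := hFa0.trans_le (hFle n le_rfl)
  calc upperSum F a n - lowerSum F a n
      = ∑ i ∈ Finset.range n, ((a (i + 1) - a i) * (a (i + 1) / F (a i))
          - (a (i + 1) - a i) * (a i / F (a (i + 1)))) := by
        rw [upperSum, lowerSum, Finset.sum_sub_distrib]
    _ ≤ ∑ i ∈ Finset.range n, (δ * ((a (i + 1) - a i) / F (a 0))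
          + δ * a n * (1 / F (a i) - 1 / F (a (i + 1)))) :=
        Finset.sum_le_sum fun i hi => hterm i (Finset.mem_range.mp hi)
    _ = δ * ((a n - a 0) / F (a 0)) + δ * a n * (1 / F (a 0) - 1 / F (a n)) := by
        rw [Finset.sum_add_distrib, ← Finset.mul_sum, ← Finset.mul_sum, ← Finset.sum_div,
          Finset.sum_range_sub, Finset.sum_range_sub' (fun i => 1 / F (a i))]
    _ ≤ δ * (2 * a n / F (a 0)) := by
        have h1 : δ * ((a n - a 0) / F (a 0)) ≤ δ * (a n / F (a 0)) := by gcongr; linarith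
        have h2 : δ * a n * (1 / F (a 0) - 1 / F (a n)) ≤ δ * (a n / F (a 0)) := by
          rw [mul_assoc, mul_sub, mul_one_div]
          gcongr
          have : 0 ≤ a n * (1 / F (a n)) :=
            mul_nonneg (ha0.trans (hmem n le_rfl).1) (one_div_nonneg.mpr hFan.le)
          linarith
        have h3 : δ * (2 * a n / F (a 0)) = δ * (a n / F (a 0)) + δ * (a n / F (a 0)) := by
          ring
        linarith

lemma integral_div_le_of_lowerSum_le {p q τ : ℝ} (hp : 0 ≤ p) (hpq : p ≤ q)
    (hF : MonotoneOn F (Icc p q)) (hFp : 0 < F p)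
    (h : ∀ n : ℕ, 0 < n → lowerSum F (uniformGrid p q n) n ≤ τ) :
    ∫ s in p..q, s / F s ≤ τ := by
  have hbound : ∀ n : ℕ, 0 < n →
      ∫ s in p..q, s / F s ≤ τ + (q - p) / n * (2 * q / F p) := by
    intro n hn
    have hmono := uniformGrid_monotone (n := n) hpq
    have hF' : MonotoneOn F (Icc (uniformGrid p q n 0) (uniformGrid p q n n)) := by
      rwa [uniformGrid_zero, uniformGrid_self hn.ne']
    have hp' : 0 ≤ uniformGrid p q n 0 := by rwa [uniformGrid_zero]
    have hFp' : 0 < F (uniformGrid p q n 0) := by rwa [uniformGrid_zero]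
    have hupper := integral_div_le_upperSum hmono hp' hF' hFp'
    have hgap := upperSum_sub_lowerSum_le hmono hp' hF' hFp'
      (div_nonneg (sub_nonneg.mpr hpq) n.cast_nonneg) fun i _ => (uniformGrid_succ_sub i).le
    rw [uniformGrid_zero, uniformGrid_self hn.ne'] at hupper hgap
    linarith [h n hn]
  have hlim : Tendsto (fun n : ℕ => τ + (q - p) / n * (2 * q / F p)) atTop
      (𝓝 (τ + 0 * (2 * q / F p))) :=
    tendsto_const_nhds.add ((tendsto_const_div_atTop_nhds_zero_nat (q - p)).mul_const _)
  rw [zero_mul, add_zero] at hlim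
  exact ge_of_tendsto hlim ((eventually_gt_atTop 0).mono hbound)

end Sums

section Subsolution

variable {F y y' : ℝ → ℝ}

lemma exists_crossing {s τ a b : ℝ} (hsτ : s ≤ τ) (hy : ContinuousOn y (Icc s τ))
    (hys : y s ≤ a) (hab : a ≤ b) (hyτ : b ≤ y τ) :
    ∃ σ ρ, s ≤ σ ∧ σ ≤ ρ ∧ ρ ≤ τ ∧ y σ ≤ a ∧ y ρ = b ∧ ∀ u ∈ Ioo σ ρ, y u ∈ Icc a b := by
  set S := Icc s τ ∩ y ⁻¹' Ici b
  have hSbdd : BddBelow S := ⟨s, fun u hu => hu.1.1⟩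
  have hρS : sInf S ∈ S := (hy.preimage_isClosed_of_isClosed isClosed_Icc isClosed_Ici).csInf_mem
    ⟨τ, ⟨hsτ, le_rfl⟩, hyτ⟩ hSbdd
  set ρ := sInf S
  obtain ⟨⟨hsρ, hρτ⟩, hbρ⟩ := hρS
  have hρ_le : ∀ u ∈ Icc s τ, b ≤ y u → ρ ≤ u := fun u hu h => csInf_le hSbdd ⟨hu, h⟩
  have hyρ : y ρ = b := by
    obtain ⟨v, hv, hyv⟩ := intermediate_value_Icc hsρ (hy.mono (Icc_subset_Icc le_rfl hρτ))
      ⟨hys.trans hab, hbρ⟩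
    rwa [le_antisymm hv.2 (hρ_le v ⟨hv.1, hv.2.trans hρτ⟩ hyv.ge)] at hyv
  set R := Icc s ρ ∩ y ⁻¹' Iic a
  have hRbdd : BddAbove R := ⟨ρ, fun u hu => hu.1.2⟩
  have hσR : sSup R ∈ R := ((hy.mono (Icc_subset_Icc le_rfl hρτ)).preimage_isClosed_of_isClosed
    isClosed_Icc isClosed_Iic).csSup_mem ⟨s, ⟨le_rfl, hsρ⟩, hys⟩ hRbdd
  obtain ⟨⟨hsσ, hσρ⟩, hσa⟩ := hσR
  refine ⟨sSup R, ρ, hsσ, hσρ, hρτ, hσa, hyρ, fun u hu => ⟨?_, ?_⟩⟩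
  · by_contra! h
    exact hu.1.not_ge (le_csSup hRbdd ⟨⟨hsσ.trans hu.1.le, hu.2.le⟩, h.le⟩)
  · by_contra! h
    exact hu.2.not_ge (hρ_le u ⟨hsσ.trans hu.1.le, hu.2.le.trans hρτ⟩ h.le)

lemma integral_le_of_mul_le {σ ρ a b : ℝ} (hσρ : σ ≤ ρ) (ha : 0 < a)
    (hF : MonotoneOn F (Icc a b)) (hFb : 0 ≤ F b) (hy' : IntervalIntegrable y' volume σ ρ)
    (hode : ∀ᵐ u ∂volume, u ∈ Ioo σ ρ → y u * y' u ≤ F (y u))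
    (hy : ∀ u ∈ Ioo σ ρ, y u ∈ Icc a b) :
    ∫ u in σ..ρ, y' u ≤ (ρ - σ) * (F b / a) := by
  have hae : y' ≤ᵐ[volume.restrict (Icc σ ρ)] fun _ => F b / a := by
    rw [← Measure.restrict_congr_set Ioo_ae_eq_Icc]
    filter_upwards [ae_restrict_mem measurableSet_Ioo, ae_restrict_of_ae hode] with u hu hode_u
    obtain ⟨hau, hub⟩ := hy u hu
    rcases le_or_gt (y' u) 0 with hneg | hpos
    · exact hneg.trans (div_nonneg hFb ha.le)
    · rw [le_div_iff₀ ha, mul_comm]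
      calc a * y' u ≤ y u * y' u := mul_le_mul_of_nonneg_right hau hpos.le
        _ ≤ F (y u) := hode_u hu
        _ ≤ F b := hF ⟨hau, hub⟩ ⟨hau.trans hub, le_rfl⟩ hub
  calc ∫ u in σ..ρ, y' u ≤ ∫ _ in σ..ρ, F b / a :=
        intervalIntegral.integral_mono_ae_restrict hσρ hy' intervalIntegrable_const hae
    _ = (ρ - σ) * (F b / a) := by rw [intervalIntegral.integral_const, smul_eq_mul]

variable {T : ℝ}

lemma continuousOn_of_eq_add_integral (hT : 0 ≤ T) (hy'_int : IntervalIntegrable y' volume 0 T)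
    (hy_ftc : ∀ t ∈ Icc 0 T, y t = y 0 + ∫ s in (0 : ℝ)..t, y' s) :
    ContinuousOn y (Icc 0 T) := by
  have hint : IntegrableOn y' (uIcc 0 T) volume := by
    rw [uIcc_of_le hT]
    exact (intervalIntegrable_iff_integrableOn_Icc_of_le hT).mp hy'_int
  have hprim := intervalIntegral.continuousOn_primitive_interval hint
  rw [uIcc_of_le hT] at hprim
  exact ((continuousOn_const (c := y 0)).add hprim).congr fun t ht => hy_ftc t ht

lemma sub_eq_integral_of_eq_add_integral (hy'_int : IntervalIntegrable y' volume 0 T)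
    (hy_ftc : ∀ t ∈ Icc 0 T, y t = y 0 + ∫ s in (0 : ℝ)..t, y' s) {σ ρ : ℝ} (hσ : 0 ≤ σ)
    (hσρ : σ ≤ ρ) (hρ : ρ ≤ T) : y ρ - y σ = ∫ u in σ..ρ, y' u := by
  have hsub : ∀ t ∈ Icc 0 T, IntervalIntegrable y' volume 0 t := fun t ht =>
    hy'_int.mono_set (uIcc_subset_uIcc left_mem_uIcc (uIcc_of_le (ht.1.trans ht.2) ▸ ht))
  rw [hy_ftc ρ ⟨hσ.trans hσρ, hρ⟩, hy_ftc σ ⟨hσ, hσρ.trans hρ⟩,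
    ← intervalIntegral.integral_interval_sub_left (hsub ρ ⟨hσ.trans hσρ, hρ⟩)
      (hsub σ ⟨hσ, hσρ.trans hρ⟩)]
  ring

lemma lowerSum_le_sub (hF_mono : MonotoneOn F (Ioi 0)) (hF_pos : ∀ s, 0 < s → 0 < F s)
    (hy'_int : IntervalIntegrable y' volume 0 T)
    (hy_ftc : ∀ t ∈ Icc 0 T, y t = y 0 + ∫ s in (0 : ℝ)..t, y' s)
    (hode : ∀ᵐ t ∂volume, t ∈ Icc 0 T → y t * y' t ≤ F (y t)) (n : ℕ) {a : ℕ → ℝ} {s τ : ℝ}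
    (ha : Monotone a) (ha0 : 0 < a 0) (hs : 0 ≤ s) (hsτ : s ≤ τ) (hτ : τ ≤ T)
    (hys : y s ≤ a 0) (hyτ : a n ≤ y τ) : lowerSum F a n ≤ τ - s := by
  induction n generalizing a s with
  | zero => simpa [lowerSum] using hsτ
  | succ n ih =>
    have ha1 : 0 < a 1 := ha0.trans_le (ha zero_le_one)
    have hy_cont : ContinuousOn y (Icc s τ) :=
      (continuousOn_of_eq_add_integral (hs.trans (hsτ.trans hτ)) hy'_int hy_ftc).mono
        (Icc_subset_Icc hs hτ)
    obtain ⟨σ, ρ, hsσ, hσρ, hρτ, hyσ, hyρ, hrange⟩ :=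
      exists_crossing hsτ hy_cont hys (ha zero_le_one) ((ha (Nat.le_add_left 1 n)).trans hyτ)
    have hσ : 0 ≤ σ := hs.trans hsσ
    have hρT : ρ ≤ T := hρτ.trans hτ
    have hspeed : a 1 - a 0 ≤ (ρ - σ) * (F (a 1) / a 0) := by
      have hint := integral_le_of_mul_le hσρ ha0
        (hF_mono.mono fun x hx => ha0.trans_le hx.1) (hF_pos _ ha1).le
        (hy'_int.mono_set (uIcc_subset_uIcc (Icc_subset_uIcc ⟨hσ, hσρ.trans hρT⟩)
          (Icc_subset_uIcc ⟨hσ.trans hσρ, hρT⟩)))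
        (hode.mono fun u hu hmem => hu ⟨hσ.trans hmem.1.le, hmem.2.le.trans hρT⟩) hrange
      rw [← sub_eq_integral_of_eq_add_integral hy'_int hy_ftc hσ hσρ hρT] at hint
      linarith
    have hfirst : (a 1 - a 0) * (a 0 / F (a 1)) ≤ ρ - σ := by
      have hF1 := hF_pos _ ha1
      calc (a 1 - a 0) * (a 0 / F (a 1)) ≤ (ρ - σ) * (F (a 1) / a 0) * (a 0 / F (a 1)) :=
            mul_le_mul_of_nonneg_right hspeed (div_nonneg ha0.le hF1.le)
        _ = ρ - σ := by field_simp
    have hrest := ih (a := fun i => a (i + 1)) (fun i j hij => ha (Nat.succ_le_succ hij)) ha1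
      (hσ.trans hσρ) hρτ hyρ.le hyτ
    rw [lowerSum, Finset.sum_range_succ']
    simp only [lowerSum] at hrest
    linarith

theorem integral_div_le_of_climb (hF_mono : MonotoneOn F (Ioi 0))
    (hF_pos : ∀ s, 0 < s → 0 < F s) (hy'_int : IntervalIntegrable y' volume 0 T)
    (hy_ftc : ∀ t ∈ Icc 0 T, y t = y 0 + ∫ s in (0 : ℝ)..t, y' s)
    (hode : ∀ᵐ t ∂volume, t ∈ Icc 0 T → y t * y' t ≤ F (y t)) {B C τ : ℝ} (hB : 0 ≤ B)
    (hBC : B ≤ C) (hτ0 : 0 ≤ τ) (hτT : τ ≤ T) (hy0 : y 0 ≤ B) (hyτ : C ≤ y τ) :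
    ∫ s in B..C, s / F s ≤ τ := by
  have hlevel : ∀ p ∈ Ioo B C, ∫ s in p..C, s / F s ≤ τ := by
    intro p ⟨hBp, hpC⟩
    have hp : 0 < p := hB.trans_lt hBp
    refine integral_div_le_of_lowerSum_le hp.le hpC.le
      (hF_mono.mono fun x hx => hp.trans_le hx.1) (hF_pos p hp) fun n hn => ?_
    have hsum := lowerSum_le_sub hF_mono hF_pos hy'_int hy_ftc hode n
      (uniformGrid_monotone (n := n) hpC.le) (by rwa [uniformGrid_zero]) le_rfl hτ0 hτT
      (by rw [uniformGrid_zero]; linarith) (by rwa [uniformGrid_self hn.ne'])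
    rwa [sub_zero] at hsum
  rcases hBC.eq_or_lt with rfl | hBC
  · simpa using hτ0
  by_cases hg : IntervalIntegrable (fun s => s / F s) volume B C
  swap
  · rw [intervalIntegral.integral_undef hg]
    exact hτ0
  have hcont : ContinuousWithinAt (fun p => ∫ s in p..C, s / F s) (Icc B C) B := by
    have hint : IntegrableOn (fun s => s / F s) (uIcc B C) volume := by
      rw [uIcc_of_le hBC.le]
      exact (intervalIntegrable_iff_integrableOn_Icc_of_le hBC.le).mp hg
    have hprim := intervalIntegral.continuousOn_primitive_interval_left hint
    rw [uIcc_of_le hBC.le] at hprim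
    exact hprim B ⟨le_rfl, hBC.le⟩
  exact le_of_tendsto (hcont.tendsto.mono_left (nhdsWithin_le_of_mem (Icc_mem_nhdsGT hBC)))
    (mem_of_superset (Ioo_mem_nhdsGT hBC) hlevel)

end Subsolution

end ODEComparison

open ODEComparison

theorem stmt_0_general (F : ℝ → ℝ) (hF_mono : MonotoneOn F (Ici 0))
    (hF_pos : ∀ s, 0 < s → 0 < F s)
    (T B : ℝ) (hB : 0 ≤ B)
    (y y' : ℝ → ℝ)
    (hy'_int : IntervalIntegrable y' volume 0 T)
    (hy_ftc : ∀ t ∈ Icc 0 T, y t = y 0 + ∫ s in (0:ℝ)..t, y' s)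
    (hode : ∀ᵐ t ∂(volume : Measure ℝ), t ∈ Icc 0 T → y t * y' t ≤ F (y t))
    (hy0 : y 0 ≤ B) :
    ∀ t ∈ Icc 0 (min T (∫ s in B..(2*B+1), s / F s)), y t ≤ 2*B + 1 := by
  rintro t ⟨ht0, htmin⟩
  obtain ⟨htT, htI⟩ := le_min_iff.mp htmin
  by_contra! hyt
  have hy_cont : ContinuousOn y (Icc 0 t) :=
    (continuousOn_of_eq_add_integral (ht0.trans htT) hy'_int hy_ftc).mono
      (Icc_subset_Icc le_rfl htT)
  obtain ⟨u, ⟨hu0, hut⟩, hyu⟩ :=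
    intermediate_value_Icc ht0 hy_cont ⟨by linarith, hyt.le⟩
  have hut' : u < t := hut.lt_of_ne (by rintro rfl; linarith)
  have hclimb := integral_div_le_of_climb (hF_mono.mono Ioi_subset_Ici_self) hF_pos hy'_int
    hy_ftc hode hB (by linarith) hu0 (hut.trans htT) hy0 hyu.ge
  linarith

/-- ODE comparison lemma: if `y y' ≤ F(y)` a.e., `y(0) ≤ B`, then `y ≤ 2B+1`
up to time `min T (∫_B^{2B+1} s/F(s) ds)`. -/
theorem stmt_0 (F : ℝ → ℝ) (hF_mono : MonotoneOn F (Ici 0))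
    (hF_cont : ContinuousOn F (Ici 0))
    (hF_nonneg : ∀ s, 0 ≤ s → 0 ≤ F s) (hF_pos : ∀ s, 0 < s → 0 < F s)
    (T B : ℝ) (hT : 0 < T) (hB : 0 ≤ B)
    (y y' : ℝ → ℝ) (hy_nonneg : ∀ t ∈ Icc 0 T, 0 ≤ y t)
    (hy'_int : IntervalIntegrable y' volume 0 T)
    (hy_ftc : ∀ t ∈ Icc 0 T, y t = y 0 + ∫ s in (0:ℝ)..t, y' s)
    (hode : ∀ᵐ t ∂(volume : Measure ℝ), t ∈ Icc 0 T → y t * y' t ≤ F (y t))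
    (hy0 : y 0 ≤ B) :
    ∀ t ∈ Icc 0 (min T (∫ s in B..(2*B+1), s / F s)), y t ≤ 2*B + 1 :=
  stmt_0_general F hF_mono hF_pos T B hB y y' hy'_int hy_ftc hode hy0
end

section
/- With the notation of the previous statement, for every ε > 0, if t ≥ (C_d + d ln⁻ τ*(u) + 2 ln⁻ ε) τ*(u) for a suitable dimensional constant C_d, then sup_{s≥0} ‖S_{s,s+t}‖_{L¹₀ → L^∞₀} ≤ ε, where ln⁻ x = max(0, -ln x). -/
/-!
Smooth `L¹ → L²` over a time `t₀ = min τ 1`, let the `L²` norm halve `N` times over `N`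
dissipation times, then smooth `L² → L^∞` over another `t₀`. The two smoothing factors
`c t₀^{-d/4}` together cost `c² e^{(d/2) ln⁻ τ}`, and `N ≥ 2 log₂ c + d ln⁻ τ + 2 ln⁻ ε` halvings
absorb this and leave a factor at most `ε`.
-/

open Real

lemma le_pow_mul_of_forall_le_mul_add {f : ℝ → ℝ} {τ q : ℝ} (hτ : 0 ≤ τ) (hq : 0 ≤ q)
    (hstep : ∀ s, 0 ≤ s → f (s + τ) ≤ q * f s) {s : ℝ} (hs : 0 ≤ s) (k : ℕ) :
    f (s + k * τ) ≤ q ^ k * f s := by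
  induction k with
  | zero => simp
  | succ k ih =>
    calc f (s + (k + 1 : ℕ) * τ) = f (s + k * τ + τ) := by push_cast; ring_nf
      _ ≤ q * f (s + k * τ) := hstep _ (by positivity)
      _ ≤ q * (q ^ k * f s) := by gcongr
      _ = q ^ (k + 1) * f s := by ring

lemma neg_log_min_one {τ : ℝ} (hτ : 0 < τ) : -log (min τ 1) = max 0 (-log τ) := by
  rcases le_total τ 1 with h | h
  · rw [min_eq_left h, max_eq_right (neg_nonneg.2 (log_nonpos hτ.le h))]
  · rw [min_eq_right h, log_one, neg_zero, max_eq_left (neg_nonpos.2 (log_nonneg h))]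

lemma sq_mul_rpow_min_mul_half_pow_le (d : ℕ) {c τ ε : ℝ} (hc : 0 < c) (hτ : 0 < τ)
    (hε : 0 < ε) {N : ℕ}
    (hN : 2 * log c / log 2 + d * max 0 (-log τ) + 2 * max 0 (-log ε) ≤ N) :
    (c * min τ 1 ^ (-(d : ℝ) / 4)) ^ 2 * (1 / 2) ^ N ≤ ε := by
  set Lτ := max 0 (-log τ)
  set Lε := max 0 (-log ε)
  have ht₀ : 0 < min τ 1 := lt_min hτ one_pos
  have hlog2 : 1 / 2 < log 2 := by linarith [log_two_gt_d9]
  have hlogLHS : log ((c * min τ 1 ^ (-(d : ℝ) / 4)) ^ 2 * (1 / 2) ^ N)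
      = 2 * log c + d / 2 * Lτ - N * log 2 := by
    rw [log_mul (by positivity) (by positivity), log_pow, log_pow,
      log_mul hc.ne' (by positivity), log_rpow ht₀, one_div, log_inv,
      ← neg_neg (log (min τ 1)), neg_log_min_one hτ]
    ring
  have hNlog : 2 * log c + d * Lτ * log 2 + 2 * Lε * log 2 ≤ N * log 2 := by
    have := mul_le_mul_of_nonneg_right hN (log_pos one_lt_two).le
    rwa [add_mul, add_mul, div_mul_cancel₀ _ (log_pos one_lt_two).ne'] at this
  have hdLτ : 0 ≤ (d : ℝ) * Lτ := mul_nonneg d.cast_nonneg (le_max_left _ _)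
  have hLε : 0 ≤ Lε := le_max_left _ _
  have hlogε : -Lε ≤ log ε := neg_le.1 (le_max_right _ _)
  rw [← log_le_log_iff (by positivity) hε, hlogLHS]
  nlinarith [mul_le_mul_of_nonneg_left hlog2.le hdLτ, mul_le_mul_of_nonneg_left hlog2.le hLε]

/-- Quantitative `L¹₀ → L^∞₀` smallness (Proposition 5.2): there is a
dimensional constant `C_d` such that if `t ≥ (C_d + d ln⁻ τ + 2 ln⁻ ε) τ`
(with `τ` a dissipation/halving time of the advection-diffusion evolution),
then `‖S_{s,s+t}‖_{L¹₀→L^∞₀} ≤ ε`, i.e. `ninf(φ_{s+t}) ≤ ε · n1(φ_s)`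
for every mean-zero solution `φ`. -/
theorem stmt_10 (d : ℕ) (c_d : ℝ) (hc : 1 ≤ c_d) :
    ∃ C_d : ℝ, ∀ (V : Type) (n1 n2 ninf : V → ℝ) (φ : ℝ → V) (τ : ℝ), 0 < τ →
      (∀ v, 0 ≤ n1 v) → (∀ v, 0 ≤ n2 v) → (∀ v, 0 ≤ ninf v) →
      (∀ s t, 0 ≤ s → s ≤ t → n2 (φ t) ≤ n2 (φ s)) →
      (∀ s t, 0 ≤ s → s ≤ t → ninf (φ t) ≤ ninf (φ s)) →
      (∀ s, 0 ≤ s → ∀ t ∈ Set.Ioc (0:ℝ) 1,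
        ninf (φ (s + t)) ≤ c_d * t ^ (-(d:ℝ)/4) * n2 (φ s)) →
      (∀ s, 0 ≤ s → ∀ t ∈ Set.Ioc (0:ℝ) 1,
        n2 (φ (s + t)) ≤ c_d * t ^ (-(d:ℝ)/4) * n1 (φ s)) →
      (∀ s, 0 ≤ s → n2 (φ (s + τ)) ≤ (1/2) * n2 (φ s)) →
      ∀ ε, 0 < ε →
        ∀ t, (C_d + (d:ℝ) * max 0 (-Real.log τ) + 2 * max 0 (-Real.log ε)) * τ ≤ t →
        ∀ s, 0 ≤ s → ninf (φ (s + t)) ≤ ε * n1 (φ s) := by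
  refine ⟨2 * log c_d / log 2 + 3, ?_⟩
  intro V n1 n2 ninf φ τ hτ hn1 _ _ _ hmono hL2Linf hL1L2 hhalf ε hε t ht s hs
  set A := 2 * log c_d / log 2 + d * max 0 (-log τ) + 2 * max 0 (-log ε)
  have hA : 0 ≤ A := by have := log_nonneg hc; positivity
  set N := ⌈A⌉₊
  set t₀ := min τ 1
  have ht₀pos : 0 < t₀ := lt_min hτ one_pos
  have ht₀ : t₀ ∈ Set.Ioc (0 : ℝ) 1 := ⟨ht₀pos, min_le_right _ _⟩
  set K := c_d * t₀ ^ (-(d : ℝ) / 4)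
  have hdecay : n2 (φ (s + t₀ + N * τ)) ≤ (1 / 2) ^ N * n2 (φ (s + t₀)) :=
    le_pow_mul_of_forall_le_mul_add (f := fun r ↦ n2 (φ r)) hτ.le (by norm_num) hhalf
      (by positivity) N
  -- `N ≤ A + 1` and the two smoothing times `t₀ ≤ τ` account for the `+ 3` in `C_d`.
  have htime : s + t₀ + N * τ + t₀ ≤ s + t := by
    nlinarith [Nat.ceil_lt_add_one hA, min_le_left τ 1]
  calc ninf (φ (s + t)) ≤ ninf (φ (s + t₀ + N * τ + t₀)) := hmono _ _ (by positivity) htime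
    _ ≤ K * n2 (φ (s + t₀ + N * τ)) := hL2Linf _ (by positivity) t₀ ht₀
    _ ≤ K * ((1 / 2) ^ N * (K * n1 (φ s))) := by
      gcongr
      exact hdecay.trans (by gcongr; exact hL1L2 s hs t₀ ht₀)
    _ = K ^ 2 * (1 / 2) ^ N * n1 (φ s) := by ring
    _ ≤ ε * n1 (φ s) := by
      gcongr
      · exact hn1 _
      · exact sq_mul_rpow_min_mul_half_pow_le d (by linarith) hτ hε (Nat.le_ceil A)
end
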